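/- arXiv:2306.13019 — 6 statements merged into one kernel-verified Lean document; each statement's English description precedes it below -/
import Mathlib

section
/- Let A_n be the set of bitstrings of length 2n+1 with exactly n ones and B_n the set with exactly n+1 ones. Then A_n = { σ^s(x0) : x a Dyck word of length 2n, 0 ≤ s ≤ 2n } and B_n = { σ^s(x1) : x a Dyck word of length 2n, 0 ≤ s ≤ 2n }. -/
/-- Every prefix has at least as many 1s (`true`) as 0s (`false`). -/
def IsDyckPrefix (x : List Bool) : Prop :=
  ∀ p : List Bool, p <+: x → p.count false ≤ p.count true

/-- A (balanced) Dyck word. -/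
def IsDyckWord (x : List Bool) : Prop :=
  x.count true = x.count false ∧ IsDyckPrefix x

/-- A Dyck word of length `2*n` (so with `n` ones). -/
def DyckN (n : ℕ) (x : List Bool) : Prop :=
  x.length = 2 * n ∧ x.count true = n ∧ IsDyckPrefix x

/-- Cyclic right rotation by `s` steps. -/
def rotR (s : ℕ) (x : List Bool) : List Bool :=
  x.rotate (x.length - s % x.length)

/-
Read a word as a lattice path (`true` = up, `false` = down). If its total height is `-1`, rotate
it so that it ends with the down-step reaching the first minimum of the height: the steps after
it never go below that minimum and the steps before it stay strictly above, so what precedes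
this final step is a Dyck word. If the total height is `+1`, rotate it so that it ends with the
up-step leaving the last minimum instead. Conversely, rotation preserves length and letter counts.
-/

namespace DyckRotation

def height (l : List Bool) : ℤ := l.count true - l.count false

@[simp] lemma height_nil : height [] = 0 := rfl

@[simp] lemma height_append (l l' : List Bool) : height (l ++ l') = height l + height l' := by
  simp only [height, List.count_append]; push_cast; ring

@[simp] lemma height_cons_true (l : List Bool) : height (true :: l) = height l + 1 := by
  simp only [height, List.count_cons_self, List.count_cons_of_ne, ne_eq, Bool.true_eq_false,
    not_false_eq_true, Nat.cast_add, Nat.cast_one]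
  ring

@[simp] lemma height_cons_false (l : List Bool) : height (false :: l) = height l - 1 := by
  simp only [height, List.count_cons_self, List.count_cons_of_ne, ne_eq, Bool.false_eq_true,
    not_false_eq_true, Nat.cast_add, Nat.cast_one]
  ring

lemma isDyckPrefix_iff {x : List Bool} : IsDyckPrefix x ↔ ∀ p, p <+: x → 0 ≤ height p := by
  simp only [IsDyckPrefix, height, sub_nonneg, Nat.cast_le]

lemma prefix_append_cases {α : Type*} {p v u : List α} (h : p <+: v ++ u) :
    p <+: v ∨ ∃ q, q <+: u ∧ p = v ++ q := by
  rcases List.prefix_or_prefix_of_prefix h (List.prefix_append v u) with hp | ⟨q, rfl⟩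
  · exact Or.inl hp
  · exact Or.inr ⟨q, (List.prefix_append_right_inj v).1 h, rfl⟩

lemma isDyckWord_iff {x : List Bool} : IsDyckWord x ↔ height x = 0 ∧ IsDyckPrefix x := by
  simp only [IsDyckWord, height, sub_eq_zero, Nat.cast_inj]

lemma isDyckWord_append {v u : List Bool} (hv : IsDyckPrefix v)
    (hu : ∀ p, p <+: u → height u ≤ height p) (h : height v + height u = 0) :
    IsDyckWord (v ++ u) := by
  rw [isDyckWord_iff, height_append, isDyckPrefix_iff]
  rw [isDyckPrefix_iff] at hv
  refine ⟨h, fun p hp => ?_⟩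
  rcases prefix_append_cases hp with hp | ⟨q, hq, rfl⟩
  · exact hv p hp
  · have := hu q hq
    rw [height_append]
    omega

lemma exists_prefix_first_min {α : Type*} (f : List α → ℤ) (y : List α) :
    ∃ w, w <+: y ∧ ∀ p, p <+: y → f w < f p ∨ f w = f p ∧ w.length ≤ p.length := by
  obtain ⟨w, hw, hmin⟩ := Set.exists_min_image {p | p ∈ y.inits}
    (fun p => toLex (f p, p.length)) y.inits.finite_toSet ⟨[], by simp⟩
  simp only [Set.mem_ofPred_eq, List.mem_inits] at hw hmin
  exact ⟨w, hw, fun p hp => Prod.Lex.toLex_le_toLex.1 (hmin p hp)⟩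

lemma exists_prefix_last_min {α : Type*} (f : List α → ℤ) (y : List α) :
    ∃ w, w <+: y ∧ ∀ p, p <+: y → f w < f p ∨ f w = f p ∧ p.length ≤ w.length := by
  obtain ⟨w, hw, hmin⟩ := Set.exists_min_image {p | p ∈ y.inits}
    (fun p => toLex (f p, OrderDual.toDual p.length)) y.inits.finite_toSet ⟨[], by simp⟩
  simp only [Set.mem_ofPred_eq, List.mem_inits] at hw hmin
  exact ⟨w, hw, fun p hp => Prod.Lex.toLex_le_toLex.1 (hmin p hp)⟩

lemma exists_rotate_eq_append_false {y : List Bool} (hy : height y = -1) :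
    ∃ x k, IsDyckWord x ∧ y.rotate k = x ++ [false] := by
  obtain ⟨w, ⟨v, rfl⟩, hw⟩ := exists_prefix_first_min height y
  rcases w.eq_nil_or_concat with rfl | ⟨u, b, rfl⟩
  · have := hw ([] ++ v) List.prefix_rfl
    simp only [List.nil_append, height_nil] at hy this
    omega
  rw [List.concat_eq_append] at hw hy ⊢
  have hu : u ++ [b] <+: u ++ [b] ++ v := List.prefix_append _ _
  obtain rfl : b = false := by
    have := hw u ((List.prefix_append _ _).trans hu)
    cases b
    · rfl
    · simp only [height_append, height_cons_true, height_nil, List.length_append,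
        List.length_cons, List.length_nil] at this
      omega
  refine ⟨v ++ u, u.length + 1, isDyckWord_append ?_ ?_ ?_, ?_⟩
  · rw [isDyckPrefix_iff]
    intro q hq
    have := hw (u ++ [false] ++ q) ((List.prefix_append_right_inj _).2 hq)
    simp only [height_append, height_cons_false, height_nil] at this
    omega
  · intro p hp
    have hmin := hw p (hp.trans ((List.prefix_append _ _).trans hu))
    have := hp.length_le
    simp only [height_append, height_cons_false, height_nil, List.length_append,
      List.length_cons, List.length_nil] at hmin
    omega
  · simp only [height_append, height_cons_false, height_nil] at hy
    omega
  · simpa using List.rotate_append_length_eq (u ++ [false]) v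

lemma exists_rotate_eq_append_true {y : List Bool} (hy : height y = 1) :
    ∃ x k, IsDyckWord x ∧ y.rotate k = x ++ [true] := by
  obtain ⟨w, ⟨_ | ⟨b, v⟩, rfl⟩, hw⟩ := exists_prefix_last_min height y
  · have := hw [] List.nil_prefix
    simp only [List.append_nil, height_nil] at hy this
    omega
  obtain rfl : b = true := by
    have := hw (w ++ [b]) (by simp)
    cases b
    · simp only [height_append, height_cons_false, height_nil, List.length_append,
        List.length_cons, List.length_nil] at this
      omega
    · rfl
  refine ⟨v ++ w, w.length + 1, isDyckWord_append ?_ ?_ ?_, ?_⟩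
  · rw [isDyckPrefix_iff]
    intro q hq
    have := hw (w ++ true :: q)
      ((List.prefix_append_right_inj w).2 (List.cons_prefix_cons.2 ⟨rfl, hq⟩))
    simp only [height_append, height_cons_true, List.length_append, List.length_cons] at this
    omega
  · intro p hp
    have := hw p (hp.trans (List.prefix_append _ _))
    omega
  · simp only [height_append, height_cons_true] at hy
    omega
  · simpa using List.rotate_append_length_eq (w ++ [true]) v

lemma height_eq_two_mul_count_sub_length (l : List Bool) :
    height l = 2 * l.count true - l.length := by
  rw [height, ← l.count_true_add_count_false]
  push_cast
  ring

@[simp] lemma length_rotR (s : ℕ) (x : List Bool) : (rotR s x).length = x.length :=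
  List.length_rotate _ _

@[simp] lemma count_rotR (s : ℕ) (x : List Bool) (b : Bool) : (rotR s x).count b = x.count b :=
  (List.rotate_perm _ _).count_eq b

lemma rotate_eq_iff_eq_rotR {y z : List Bool} {k : ℕ} : y.rotate k = z ↔ y = rotR k z :=
  List.rotate_eq_iff

lemma rotR_mod_length (s : ℕ) (x : List Bool) : rotR (s % x.length) x = rotR s x := by
  simp only [rotR, Nat.mod_mod]

lemma exists_dyckN_of_rotate_eq {n k : ℕ} {x y : List Bool} {b : Bool}
    (hy : y.length = 2 * n + 1) (hx : IsDyckWord x) (h : y.rotate k = x ++ [b]) :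
    ∃ x s, DyckN n x ∧ s ≤ 2 * n ∧ y = rotR s (x ++ [b]) := by
  have hxl : (x ++ [b]).length = 2 * n + 1 := by rw [← h, List.length_rotate, hy]
  rw [List.length_append, List.length_singleton] at hxl
  refine ⟨x, k % (2 * n + 1), ⟨by omega, ?_, hx.2⟩,
    Nat.lt_succ_iff.1 (Nat.mod_lt _ (by omega)), ?_⟩
  · have := x.count_true_add_count_false
    have := hx.1
    omega
  · rw [show 2 * n + 1 = (x ++ [b]).length by simp [hxl], rotR_mod_length,
      ← rotate_eq_iff_eq_rotR, h]

end DyckRotation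

open DyckRotation

/-- the levels `A_n` and `B_n` of `Q_{2n+1}` consist exactly of the
cyclic rotations `σ^s(x0)` resp. `σ^s(x1)` of Dyck words `x` of length `2n`,
with shifts `0 ≤ s ≤ 2n`. -/
theorem levels_eq_rotated_dyck (n : ℕ) :
    ({y : List Bool | y.length = 2 * n + 1 ∧ y.count true = n} =
      {y : List Bool | ∃ x s, DyckN n x ∧ s ≤ 2 * n ∧ y = rotR s (x ++ [false])}) ∧
    ({y : List Bool | y.length = 2 * n + 1 ∧ y.count true = n + 1} =
      {y : List Bool | ∃ x s, DyckN n x ∧ s ≤ 2 * n ∧ y = rotR s (x ++ [true])}) := by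
  refine ⟨Set.ext fun y => ⟨fun ⟨hl, ht⟩ => ?_, ?_⟩,
    Set.ext fun y => ⟨fun ⟨hl, ht⟩ => ?_, ?_⟩⟩
  · obtain ⟨x, k, hx, h⟩ := exists_rotate_eq_append_false
      (by rw [height_eq_two_mul_count_sub_length, hl, ht]; push_cast; ring)
    exact exists_dyckN_of_rotate_eq hl hx h
  · rintro ⟨x, s, hx, -, rfl⟩
    simp [hx.1, hx.2.1]
  · obtain ⟨x, k, hx, h⟩ := exists_rotate_eq_append_true
      (by rw [height_eq_two_mul_count_sub_length, hl, ht]; push_cast; ring)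
    exact exists_dyckN_of_rotate_eq hl hx h
  · rintro ⟨x, s, hx, -, rfl⟩
    simp [hx.1, hx.2.1]
end

section
/- The representation of vertices in the middle levels as triples is unique: if σ^s(xb) = σ^{s'}(x'b') for Dyck words x, x' of length 2n, bits b, b', and shifts s, s' in {0,...,2n}, then x = x', b = b', and s = s'. -/
theorem DyckN.isDyckWord {n : ℕ} {x : List Bool} (hx : DyckN n x) : IsDyckWord x := by
  obtain ⟨hlen, htrue, hpre⟩ := hx
  refine ⟨?_, hpre⟩
  have := List.count_true_add_count_false x
  omega

theorem IsDyckWord.not_isDyckWord_swap {p q : List Bool} {b c : Bool}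
    (hx : IsDyckWord (p ++ c :: q)) : ¬ IsDyckWord (q ++ b :: p) := by
  rintro ⟨hbal', hpre'⟩
  obtain ⟨hbal, hpre⟩ := hx
  have hp := hpre p (List.prefix_append _ _)
  have hpc := hpre (p ++ [c]) (by simp)
  have hq := hpre' q (List.prefix_append _ _)
  have hqb := hpre' (q ++ [b]) (by simp)
  cases b <;> cases c <;> simp [List.count_append] at * <;> omega

theorem List.exists_eq_append_cons_of_rotate_append_singleton {α : Type*} {x x' : List α}
    {b c : α} {t : ℕ} (h : (x ++ [b]).rotate t = x' ++ [c]) (ht : 0 < t) (htx : t ≤ x.length) :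
    ∃ p q, x = p ++ c :: q ∧ x' = q ++ b :: p := by
  rw [List.rotate_eq_drop_append_take (by simp; omega), List.drop_append_of_le_length htx,
    List.take_append_of_le_length htx] at h
  obtain hnil | ⟨p, d, hpd⟩ := (x.take t).eq_nil_or_concat
  · have := congrArg List.length hnil
    simp only [List.length_take, List.length_nil] at this
    omega
  rw [List.concat_eq_append] at hpd
  rw [hpd, ← List.append_assoc] at h
  obtain ⟨hx', hdc⟩ := List.append_inj' h rfl
  simp only [List.singleton_inj] at hdc
  refine ⟨p, x.drop t, ?_, by simpa using hx'.symm⟩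
  have hsplit := List.take_append_drop t x
  rw [hpd, hdc] at hsplit
  simpa using hsplit.symm

theorem rotate_sub_eq_of_rotR_eq {l l' : List Bool} {s s' : ℕ} (hlen : l.length = l'.length)
    (hs : s < l.length) (hle : s' ≤ s) (h : rotR s l = rotR s' l') : l'.rotate (s - s') = l := by
  unfold rotR at h
  rw [Nat.mod_eq_of_lt hs, ← hlen, Nat.mod_eq_of_lt (by omega), hlen] at h
  have hback := congrArg (List.rotate · s) h
  simp only [List.rotate_rotate] at hback
  rw [Nat.sub_add_cancel (by omega), ← hlen, List.rotate_length] at hback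
  rw [hback, hlen, show l'.length - s' + s = l'.length + (s - s') by omega, ← List.rotate_rotate,
    List.rotate_length]

/-- the triple representation `⟨x,b,s⟩ = σ^s(xb)` of vertices of the
middle levels is unique. -/
theorem triple_representation_unique (n : ℕ) (x x' : List Bool) (b b' : Bool)
    (s s' : ℕ) (hx : DyckN n x) (hx' : DyckN n x') (hs : s ≤ 2 * n) (hs' : s' ≤ 2 * n)
    (h : rotR s (x ++ [b]) = rotR s' (x' ++ [b'])) :
    x = x' ∧ b = b' ∧ s = s' := by
  wlog hle : s' ≤ s generalizing x x' b b' s s'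
  · obtain ⟨rfl, rfl, rfl⟩ := this x' x b' b s' s hx' hx hs' hs h.symm (by omega)
    exact ⟨rfl, rfl, rfl⟩
  have hrot : (x' ++ [b']).rotate (s - s') = x ++ [b] :=
    rotate_sub_eq_of_rotR_eq (by simp [hx.1, hx'.1]) (by simp [hx.1]; omega) hle h
  obtain hzero | hpos := Nat.eq_zero_or_pos (s - s')
  · rw [hzero, List.rotate_zero] at hrot
    obtain ⟨rfl, hbb⟩ := List.append_inj' hrot rfl
    exact ⟨rfl, by simpa using hbb.symm, by omega⟩
  · obtain ⟨p, q, rfl, rfl⟩ :=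
      List.exists_eq_append_cons_of_rotate_append_singleton hrot hpos (by rw [hx'.1]; omega)
    exact absurd hx.isDyckWord (hx'.isDyckWord.not_isDyckWord_swap)
end

section
/- For every Dyck word x of length 2n, r^{2n}(x) = x, where r is the tree rotation r(1u0v) = u1v0 on Dyck words of length 2n. -/
/-!
The key fact is that `r` rotates a concatenation `u ++ z` of Dyck words by `u` in `|u|` steps:
`r^[|u|] (u ++ z) = z ++ u`. For `u = 1a0b` this follows by strong induction on `|u|`:
`r` turns `1a0(bz)` into `a1(bz)0`, then `|a|` steps move `a` to the back, giving `1(bz)0a`,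
one more step gives `bz1a0`, and `|b|` further steps give `z1a0b = z ++ u`, in
`1 + |a| + 1 + |b| = |u|` steps. The theorem is the case `z = []`.
-/

theorem List.IsPrefix.prefix_or_eq_append {α : Type*} {p u v : List α} (h : p <+: u ++ v) :
    p <+: u ∨ ∃ q, q <+: v ∧ p = u ++ q := by
  rcases List.prefix_or_prefix_of_prefix h (List.prefix_append u v) with hpu | ⟨q, rfl⟩
  · exact Or.inl hpu
  · exact Or.inr ⟨q, (List.prefix_append_right_inj u).mp h, rfl⟩

theorem IsDyckPrefix.append {u v : List Bool} (hu : IsDyckPrefix u)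
    (hv : ∀ q, q <+: v → u.count false + q.count false ≤ u.count true + q.count true) :
    IsDyckPrefix (u ++ v) := by
  intro p hp
  rcases hp.prefix_or_eq_append with hpu | ⟨q, hq, rfl⟩
  · exact hu p hpu
  · simpa only [List.count_append] using hv q hq

theorem exists_isDyckWord_eq_append_false_cons {t : List Bool}
    (hbound : ∀ p, p <+: t → p.count false ≤ p.count true + 1)
    (hend : t.count false = t.count true + 1) :
    ∃ a b, IsDyckWord a ∧ t = a ++ false :: b := by
  have hP : ∃ m, (t.take m).count false = (t.take m).count true + 1 :=
    ⟨t.length, by rwa [List.take_length]⟩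
  -- split `t` at the shortest prefix with one more `false` than `true`
  obtain ⟨m, hm, hm_min⟩ : ∃ m, (t.take m).count false = (t.take m).count true + 1 ∧
      ∀ j < m, (t.take j).count false ≠ (t.take j).count true + 1 :=
    ⟨Nat.find hP, Nat.find_spec hP, fun j hj => Nat.find_min hP hj⟩
  obtain ⟨k, rfl⟩ : ∃ k, m = k + 1 :=
    Nat.exists_eq_add_one_of_ne_zero (by rintro rfl; simp at hm)
  have hk : k < t.length := by
    by_contra! hk
    exact hm_min t.length (by omega) (by rwa [List.take_of_length_le (by omega)] at hm ⊢)
  set a := t.take k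
  have htake : t.take (k + 1) = a ++ [t[k]] := by
    rw [List.take_add_one, List.getElem?_eq_getElem hk, Option.toList_some]
  have hx : t[k] = false := by
    cases hx : t[k]
    · rfl
    · have := hbound a (List.take_prefix k t)
      rw [htake, hx] at hm
      simp +decide only [List.count_append, List.count_cons, List.count_nil, ↓reduceIte] at hm
      omega
  have ha : IsDyckWord a := by
    refine ⟨?_, fun q hq => ?_⟩
    · rw [htake, hx] at hm
      simp +decide only [List.count_append, List.count_cons, List.count_nil, ↓reduceIte] at hm
      omega
    · have hqt : q <+: t := hq.trans (List.take_prefix k t)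
      have hq_len : q.length < k + 1 := by
        have : a.length ≤ k := List.length_take_le k t
        have := hq.length_le
        omega
      have hq_ne := hm_min q.length hq_len
      rw [← List.prefix_iff_eq_take.mp hqt] at hq_ne
      have := hbound q hqt
      omega
  refine ⟨a, t.drop (k + 1), ha, ?_⟩
  rw [← hx, ← List.singleton_append, ← List.append_assoc, ← htake, List.take_append_drop]

namespace IsDyckWord

theorem nil : IsDyckWord [] :=
  ⟨rfl, fun p hp => by simp [List.prefix_nil.mp hp]⟩

theorem append {u v : List Bool} (hu : IsDyckWord u) (hv : IsDyckWord v) :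
    IsDyckWord (u ++ v) := by
  refine ⟨by simp only [List.count_append, hu.1, hv.1], hu.2.append fun q hq => ?_⟩
  have := hv.2 q hq
  have := hu.1
  omega

theorem wrap {u : List Bool} (hu : IsDyckWord u) : IsDyckWord ([true] ++ u ++ [false]) := by
  have hone : IsDyckPrefix [true] := by
    intro p hp
    rcases List.prefix_cons_iff.mp hp with rfl | ⟨t, rfl, ht⟩ <;>
      simp_all [List.prefix_nil]
  have hone_u : IsDyckPrefix ([true] ++ u) := hone.append fun q hq => by
    have := hu.2 q hq
    simp +decide only [List.count_cons, List.count_nil, ↓reduceIte]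
    omega
  refine ⟨by simp [hu.1], hone_u.append fun q hq => ?_⟩
  have := hu.1
  rcases List.prefix_cons_iff.mp hq with rfl | ⟨t, rfl, ht⟩
  · simp +decide only [List.count_append, List.count_cons, List.count_nil, ↓reduceIte]
    omega
  · rw [List.prefix_nil.mp ht]
    simp +decide only [List.count_append, List.count_cons, List.count_nil, ↓reduceIte]
    omega

theorem of_append_left {w v : List Bool} (hwv : IsDyckWord (w ++ v))
    (hw : w.count true = w.count false) : IsDyckWord v := by
  refine ⟨?_, fun q hq => ?_⟩
  · have := hwv.1
    simp only [List.count_append] at this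
    omega
  · have := hwv.2 (w ++ q) ((List.prefix_append_right_inj w).mpr hq)
    simp only [List.count_append] at this
    omega

theorem exists_eq_wrap_append {u : List Bool} (hu : IsDyckWord u) (hne : u ≠ []) :
    ∃ a b, IsDyckWord a ∧ IsDyckWord b ∧ u = [true] ++ a ++ [false] ++ b := by
  obtain ⟨c, t, rfl⟩ := List.exists_cons_of_ne_nil hne
  have hc : c = true := by
    by_contra hc
    have := hu.2 [c] (by simp)
    simp_all
  subst hc
  have hbound : ∀ p, p <+: t → p.count false ≤ p.count true + 1 := fun p hp => by
    simpa using hu.2 (true :: p) (List.cons_prefix_cons.mpr ⟨rfl, hp⟩)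
  have hend : t.count false = t.count true + 1 := by
    have := hu.1
    simp +decide only [List.count_cons, ↓reduceIte] at this
    omega
  obtain ⟨a, b, ha, rfl⟩ := exists_isDyckWord_eq_append_false_cons hbound hend
  have hsplit : true :: (a ++ false :: b) = ([true] ++ a ++ [false]) ++ b := by simp
  exact ⟨a, b, ha, (hsplit ▸ hu).of_append_left (by simp [ha.1]), hsplit⟩

end IsDyckWord

def IsTreeRotation (r : List Bool → List Bool) : Prop :=
  ∀ u v : List Bool, IsDyckWord u → IsDyckWord v →
    r ([true] ++ u ++ [false] ++ v) = u ++ [true] ++ v ++ [false]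

theorem IsTreeRotation.iterate_length_append {r : List Bool → List Bool} (hr : IsTreeRotation r)
    {u z : List Bool} (hu : IsDyckWord u) (hz : IsDyckWord z) :
    r^[u.length] (u ++ z) = z ++ u := by
  induction hlen : u.length using Nat.strong_induction_on generalizing u z with
  | _ n ih =>
  subst hlen
  rcases eq_or_ne u [] with rfl | hne
  · simp
  obtain ⟨a, b, ha, hb, rfl⟩ := hu.exists_eq_wrap_append hne
  have hlen : ([true] ++ a ++ [false] ++ b).length = b.length + (1 + (a.length + 1)) := by
    simp only [List.length_append, List.length_singleton]
    omega
  have hbz := hb.append hz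
  rw [hlen, Function.iterate_add_apply, Function.iterate_add_apply, Function.iterate_add_apply,
    Function.iterate_one]
  calc r^[b.length] (r (r^[a.length] (r ([true] ++ a ++ [false] ++ b ++ z))))
      = r^[b.length] (r (r^[a.length] (a ++ ([true] ++ (b ++ z) ++ [false])))) := by
        rw [List.append_assoc _ b z, hr a (b ++ z) ha hbz]
        simp only [List.append_assoc]
    _ = r^[b.length] (r ([true] ++ (b ++ z) ++ [false] ++ a)) := by
        rw [ih a.length (by omega) ha hbz.wrap rfl]
    _ = r^[b.length] (b ++ (z ++ ([true] ++ a ++ [false]))) := by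
        rw [hr (b ++ z) a hbz ha]
        simp only [List.append_assoc]
    _ = z ++ ([true] ++ a ++ [false] ++ b) := by
        rw [ih b.length (by omega) hb (hz.append ha.wrap) rfl]
        simp only [List.append_assoc]

/-- `r^{2n}(x) = x` for every Dyck word `x` of length `2n`, where
`r` is the tree rotation. -/
theorem rotation_order_divides (n : ℕ) (r : List Bool → List Bool)
    (hr : ∀ u v : List Bool, IsDyckWord u → IsDyckWord v →
      r ([true] ++ u ++ [false] ++ v) = u ++ [true] ++ v ++ [false])
    (x : List Bool) (hx : DyckN n x) :
    r^[2 * n] x = x := by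
  obtain ⟨hlen, hcount, hpre⟩ := hx
  have hx : IsDyckWord x := ⟨by have := x.count_true_add_count_false; omega, hpre⟩
  simpa [hlen] using IsTreeRotation.iterate_length_append hr hx IsDyckWord.nil
end

section
/- For a pullable Dyck word x = 110u0v of length 2n (u, v Dyck words), its pull p(x) := 101u0v is again a Dyck word of length 2n. -/
theorem List.IsPrefix.append_cases {α : Type*} {p x y : List α} (h : p <+: x ++ y) :
    p <+: x ∨ ∃ r, p = x ++ r ∧ r <+: y := by
  rcases le_total p.length x.length with hle | hle
  · exact Or.inl ((List.isPrefix_append_of_length hle).mp h)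
  · obtain ⟨r, rfl⟩ := List.prefix_of_prefix_length_le (List.prefix_append x y) h hle
    exact Or.inr ⟨r, rfl, (List.prefix_append_right_inj x).mp h⟩

/-- The path of `x` started at height `k` never goes below height `0`. -/
def IsDyckPrefixFrom (k : ℕ) (x : List Bool) : Prop :=
  ∀ p : List Bool, p <+: x → p.count false ≤ p.count true + k

theorem IsDyckPrefix.isDyckPrefixFrom {x : List Bool} (hx : IsDyckPrefix x) (k : ℕ) :
    IsDyckPrefixFrom k x :=
  fun p hp => (hx p hp).trans (Nat.le_add_right _ k)

theorem IsDyckPrefixFrom.cons_true {k : ℕ} {x : List Bool} (hx : IsDyckPrefixFrom (k + 1) x) :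
    IsDyckPrefixFrom k (true :: x) := by
  intro p hp
  rcases List.prefix_cons_iff.mp hp with rfl | ⟨t, rfl, ht⟩
  · simp
  · simpa [List.count_cons, add_right_comm, ← add_assoc] using hx t ht

theorem IsDyckPrefixFrom.cons_false {k : ℕ} {x : List Bool} (hx : IsDyckPrefixFrom k x) :
    IsDyckPrefixFrom (k + 1) (false :: x) := by
  intro p hp
  rcases List.prefix_cons_iff.mp hp with rfl | ⟨t, rfl, ht⟩
  · simp
  · simpa [List.count_cons, ← add_assoc] using hx t ht

theorem IsDyckWord.append_isDyckPrefixFrom {k : ℕ} {x y : List Bool} (hx : IsDyckWord x)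
    (hy : IsDyckPrefixFrom k y) : IsDyckPrefixFrom k (x ++ y) := by
  intro p hp
  rcases hp.append_cases with hpx | ⟨r, rfl, hr⟩
  · exact hx.2.isDyckPrefixFrom k p hpx
  · have := hy r hr
    simp only [List.count_append, hx.1]
    omega

/-- for a pullable Dyck word `x = 110u0v` of length `2n`
(`u, v` Dyck words), its pull `p(x) = 101u0v` is again a Dyck word of length `2n`. -/
theorem pull_is_dyck (n : ℕ) (u v : List Bool)
    (hu : IsDyckWord u) (hv : IsDyckWord v)
    (hx : DyckN n ([true, true, false] ++ u ++ [false] ++ v)) :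
    DyckN n ([true, false, true] ++ u ++ [false] ++ v) := by
  obtain ⟨hlen, hcount, -⟩ := hx
  refine ⟨by simpa using hlen, by simpa using hcount, ?_⟩
  have htail : IsDyckPrefixFrom 1 (u ++ false :: v) :=
    hu.append_isDyckPrefixFrom (hv.2.isDyckPrefixFrom 0).cons_false
  show IsDyckPrefixFrom 0 _
  simpa using htail.cons_true.cons_false.cons_true
end

section
/- For a pullable Dyck word x = 110u0v of length 2n, the sequence (110u0v0, 110u1v0, 100u1v0, 101u1v0, 101u0v0, 111u0v0) is a 6-cycle in the middle levels graph M_n: consecutive bitstrings (cyclically) differ in exactly one bit, and the sequence alternates between weights n and n+1. -/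
/-- `a` and `b` differ in exactly one bit. -/
def oneBitDiff (a b : List Bool) : Prop :=
  a.length = b.length ∧
    ((Finset.range a.length).filter fun i => a[i]? ≠ b[i]?).card = 1

lemma getElem?_append_cons_ne_iff {α : Type*} (p s : List α) {b c : α} (h : b ≠ c) (i : ℕ) :
    (p ++ b :: s)[i]? ≠ (p ++ c :: s)[i]? ↔ i = p.length := by
  grind

lemma oneBitDiff_append_cons (p s : List Bool) {b c : Bool} (h : b ≠ c) :
    oneBitDiff (p ++ b :: s) (p ++ c :: s) := by
  refine ⟨by simp, Finset.card_eq_one.mpr ⟨p.length, ?_⟩⟩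
  ext i
  simp only [Finset.mem_filter, Finset.mem_range, Finset.mem_singleton,
    getElem?_append_cons_ne_iff p s h, and_iff_right_iff_imp]
  rintro rfl
  simp

theorem gluing_six_cycle_general (n : ℕ) (u v : List Bool)
    (hx : DyckN n ([true, true, false] ++ u ++ [false] ++ v)) :
    let a0 := [true, true, false] ++ u ++ [false] ++ v ++ [false]
    let a1 := [true, true, false] ++ u ++ [true] ++ v ++ [false]
    let a2 := [true, false, false] ++ u ++ [true] ++ v ++ [false]
    let a3 := [true, false, true] ++ u ++ [true] ++ v ++ [false]
    let a4 := [true, false, true] ++ u ++ [false] ++ v ++ [false]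
    let a5 := [true, true, true] ++ u ++ [false] ++ v ++ [false]
    [a0, a1, a2, a3, a4, a5].Nodup ∧
      (∀ a ∈ [a0, a1, a2, a3, a4, a5], a.length = 2 * n + 1) ∧
      a0.count true = n ∧ a1.count true = n + 1 ∧ a2.count true = n ∧
      a3.count true = n + 1 ∧ a4.count true = n ∧ a5.count true = n + 1 ∧
      oneBitDiff a0 a1 ∧ oneBitDiff a1 a2 ∧ oneBitDiff a2 a3 ∧
      oneBitDiff a3 a4 ∧ oneBitDiff a4 a5 ∧ oneBitDiff a5 a0 := by
  intro a0 a1 a2 a3 a4 a5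
  obtain ⟨hlen, hcnt, -⟩ := hx
  refine ⟨?_, ?_, by grind, by grind, by grind, by grind, by grind, by grind, ?_, ?_, ?_, ?_, ?_, ?_⟩
  · -- the first three bits together with the weight already tell the six words apart
    refine List.Nodup.of_map (fun a => (a.take 3, a.count true)) ?_
    simp [a0, a1, a2, a3, a4, a5]
  · simp only [List.mem_cons, List.not_mem_nil, or_false]
    rintro a (rfl | rfl | rfl | rfl | rfl | rfl) <;> grind
  · simpa [a0, a1] using
      oneBitDiff_append_cons ([true, true, false] ++ u) (v ++ [false]) (by decide)
  · simpa [a1, a2] using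
      oneBitDiff_append_cons [true] (false :: u ++ true :: v ++ [false]) (by decide)
  · simpa [a2, a3] using
      oneBitDiff_append_cons [true, false] (u ++ true :: v ++ [false]) (by decide)
  · simpa [a3, a4] using
      oneBitDiff_append_cons ([true, false, true] ++ u) (v ++ [false]) (by decide)
  · simpa [a4, a5] using
      oneBitDiff_append_cons [true] (true :: u ++ false :: v ++ [false]) (by decide)
  · simpa [a5, a0] using
      oneBitDiff_append_cons [true, true] (u ++ false :: v ++ [false]) (by decide)

/-- for a pullable Dyck word `x = 110u0v` of length `2n`, the six
bitstrings `110u0v0, 110u1v0, 100u1v0, 101u1v0, 101u0v0, 111u0v0` form a 6-cycle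
in the middle levels graph `M_n`: they are distinct vertices of `M_n` (length
`2n+1`, weights alternating between `n` and `n+1`) and cyclically consecutive
ones differ in exactly one bit. -/
theorem gluing_six_cycle (n : ℕ) (u v : List Bool)
    (hu : IsDyckWord u) (hv : IsDyckWord v)
    (hx : DyckN n ([true, true, false] ++ u ++ [false] ++ v)) :
    let a0 := [true, true, false] ++ u ++ [false] ++ v ++ [false]
    let a1 := [true, true, false] ++ u ++ [true] ++ v ++ [false]
    let a2 := [true, false, false] ++ u ++ [true] ++ v ++ [false]
    let a3 := [true, false, true] ++ u ++ [true] ++ v ++ [false]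
    let a4 := [true, false, true] ++ u ++ [false] ++ v ++ [false]
    let a5 := [true, true, true] ++ u ++ [false] ++ v ++ [false]
    [a0, a1, a2, a3, a4, a5].Nodup ∧
      (∀ a ∈ [a0, a1, a2, a3, a4, a5], a.length = 2 * n + 1) ∧
      a0.count true = n ∧ a1.count true = n + 1 ∧ a2.count true = n ∧
      a3.count true = n + 1 ∧ a4.count true = n ∧ a5.count true = n + 1 ∧
      oneBitDiff a0 a1 ∧ oneBitDiff a1 a2 ∧ oneBitDiff a2 a3 ∧
      oneBitDiff a3 a4 ∧ oneBitDiff a4 a5 ∧ oneBitDiff a5 a0 :=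
  gluing_six_cycle_general n u v hx
end

section
/- With y := ⟨x,0,0⟩ and z := ⟨p(x),0,0⟩ for a pullable Dyck word x = 110u0v, the 6-cycle G(x) = (y, f(y), f⁶(y), f⁵(y), z, f(z)) satisfies: (y, f(y)) and (f⁶(y), f⁵(y)) are edges of the f-orbit cycle through y, and (z, f(z)) is an edge of the f-orbit cycle through z; explicitly f(y) = 110u1v0, f⁵(y) = 101u1v0, f⁶(y) = 100u1v0, f(z) = 111u0v0. -/
theorem List.prefix_append_or {α : Type*} {p a b : List α} (h : p <+: a ++ b) :
    p <+: a ∨ ∃ q, q <+: b ∧ p = a ++ q := by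
  obtain ⟨t, ht⟩ := h
  rcases List.append_eq_append_iff.mp ht with ⟨a', ha', -⟩ | ⟨c', hc', hb⟩
  · exact Or.inl ⟨a', ha'.symm⟩
  · exact Or.inr ⟨c', ⟨t, hb.symm⟩, hc'⟩

theorem isDyckWord_nil : IsDyckWord [] :=
  ⟨rfl, fun p hp => by simp [List.prefix_nil.mp hp]⟩

theorem IsDyckWord.append_s15 {a b : List Bool} (ha : IsDyckWord a) (hb : IsDyckWord b) :
    IsDyckWord (a ++ b) := by
  refine ⟨by simp [ha.1, hb.1], fun p hp => ?_⟩
  rcases List.prefix_append_or hp with hpa | ⟨q, hqb, rfl⟩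
  · exact ha.2 p hpa
  · have := ha.1
    have := hb.2 q hqb
    simp only [List.count_append]
    omega

theorem IsDyckWord.wrap_s15 {v : List Bool} (hv : IsDyckWord v) :
    IsDyckWord ([true] ++ v ++ [false]) := by
  refine ⟨by simp [hv.1], fun p hp => ?_⟩
  rcases List.prefix_cons_iff.mp hp with rfl | ⟨t, rfl, ht⟩
  · simp
  rcases List.prefix_concat_iff.mp ht with rfl | htv
  · simp [hv.1]
  · have := hv.2 t htv
    rw [List.count_cons_self, List.count_cons_of_ne (by decide)]
    omega

theorem IsDyckWord.dyckN {n : ℕ} {x : List Bool} (hx : IsDyckWord x) (hl : x.length = 2 * n) :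
    DyckN n x := by
  refine ⟨hl, ?_, hx.2⟩
  have := List.count_true_add_count_false x
  have := hx.1
  omega

theorem rotR_zero (x : List Bool) : rotR 0 x = x := by
  simp [rotR]

theorem rotR_length_append {a : List Bool} (b : List Bool) (ha : a ≠ []) :
    rotR b.length (a ++ b) = b ++ a := by
  have hlt : b.length < (a ++ b).length := by simp [List.length_pos_iff.mpr ha]
  rw [rotR, Nat.mod_eq_of_lt hlt, List.length_append, Nat.add_sub_cancel,
    List.rotate_eq_drop_append_take (by simp), List.drop_left, List.take_left]

theorem succ_rotR_pull {n : ℕ} {r F : List Bool → List Bool}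
    (hr : ∀ u v : List Bool, IsDyckWord u → IsDyckWord v →
      r ([true] ++ u ++ [false] ++ v) = u ++ [true] ++ v ++ [false])
    (hF0 : ∀ x s, DyckN n x → s ≤ 2 * n →
      F (rotR s (x ++ [false])) = rotR (s + 1) (r x ++ [true]))
    {a b : List Bool} (ha : IsDyckWord a) (hb : IsDyckWord b)
    (hl : a.length + b.length + 2 = 2 * n) {s : ℕ} (hs : s ≤ 2 * n) :
    F (rotR s ([true] ++ a ++ [false] ++ b ++ [false])) =
      rotR (s + 1) (a ++ [true] ++ b ++ [false] ++ [true]) := by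
  have hx : DyckN n ([true] ++ a ++ [false] ++ b) :=
    (ha.wrap_s15.append_s15 hb).dyckN (by simp; omega)
  rw [hF0 _ s hx hs, hr a b ha hb]

theorem iterate_two_rotR_pull {n : ℕ} {r F : List Bool → List Bool}
    (hr : ∀ u v : List Bool, IsDyckWord u → IsDyckWord v →
      r ([true] ++ u ++ [false] ++ v) = u ++ [true] ++ v ++ [false])
    (hF0 : ∀ x s, DyckN n x → s ≤ 2 * n →
      F (rotR s (x ++ [false])) = rotR (s + 1) (r x ++ [true]))
    (hF1 : ∀ x s, DyckN n x → s ≤ 2 * n →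
      F (rotR s (x ++ [true])) = rotR s (x ++ [false]))
    {a b : List Bool} (ha : IsDyckWord a) (hb : IsDyckWord b)
    (hl : a.length + b.length + 2 = 2 * n) {s : ℕ} (hs : s + 1 ≤ 2 * n) :
    F^[2] (rotR s ([true] ++ a ++ [false] ++ b ++ [false])) =
      rotR (s + 1) (a ++ [true] ++ b ++ [false] ++ [false]) := by
  have hx : DyckN n (a ++ [true] ++ b ++ [false]) := by
    simpa using (ha.append_s15 hb.wrap_s15).dyckN (n := n) (by simp; omega)
  rw [Function.iterate_succ_apply', Function.iterate_one,
    succ_rotR_pull hr hF0 ha hb hl (by omega), hF1 _ _ hx hs]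

/-- for a pullable Dyck word `x = 110u0v` with `y := ⟨x,0,0⟩ = x0`
and `z := ⟨p(x),0,0⟩ = p(x)0`, the successor map `F` of the cycle factor (given in
triple notation by `f ⟨x,0,s⟩ = ⟨r x,1,s+1⟩`, `f ⟨x,1,s⟩ = ⟨x,0,s⟩`) satisfies
`f(y) = 110u1v0`, `f⁵(y) = 101u1v0`, `f⁶(y) = 100u1v0` and `f(z) = 111u0v0`;
hence `(y, f(y))` and `(f⁶(y), f⁵(y))` are edges of the `f`-orbit cycle through `y`,
and `(z, f(z))` is an edge of the `f`-orbit cycle through `z`. -/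
theorem gluing_cycle_shares_edges (n : ℕ) (r F : List Bool → List Bool)
    (hr : ∀ u v : List Bool, IsDyckWord u → IsDyckWord v →
      r ([true] ++ u ++ [false] ++ v) = u ++ [true] ++ v ++ [false])
    (hF0 : ∀ x s, DyckN n x → s ≤ 2 * n →
      F (rotR s (x ++ [false])) = rotR (s + 1) (r x ++ [true]))
    (hF1 : ∀ x s, DyckN n x → s ≤ 2 * n →
      F (rotR s (x ++ [true])) = rotR s (x ++ [false]))
    (u v : List Bool) (hu : IsDyckWord u) (hv : IsDyckWord v)
    (hx : DyckN n ([true, true, false] ++ u ++ [false] ++ v)) :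
    let y := [true, true, false] ++ u ++ [false] ++ v ++ [false]
    let z := [true, false, true] ++ u ++ [false] ++ v ++ [false]
    F y = [true, true, false] ++ u ++ [true] ++ v ++ [false] ∧
      F^[5] y = [true, false, true] ++ u ++ [true] ++ v ++ [false] ∧
      F^[6] y = [true, false, false] ++ u ++ [true] ++ v ++ [false] ∧
      F z = [true, true, true] ++ u ++ [false] ++ v ++ [false] := by
  intro y z
  have hlen : u.length + v.length + 4 = 2 * n := by
    have := hx.1
    simp only [List.length_append, List.length_cons, List.length_nil] at this
    omega
  have h10 : IsDyckWord [true, false] := isDyckWord_nil.wrap_s15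
  have hw : IsDyckWord (u ++ [true] ++ v ++ [false]) := by simpa using hu.append_s15 hv.wrap_s15
  have hy : y = rotR 0 ([true] ++ ([true, false] ++ u) ++ [false] ++ v ++ [false]) := by
    simp [y, rotR_zero]
  have hz : z =
      rotR 0 ([true] ++ [] ++ [false] ++ ([true] ++ u ++ [false] ++ v) ++ [false]) := by
    simp [z, rotR_zero]
  have hy2 : F^[2] y =
      rotR 1 ([true] ++ [] ++ [false] ++ (u ++ [true] ++ v ++ [false]) ++ [false]) := by
    rw [hy, iterate_two_rotR_pull hr hF0 hF1 (h10.append_s15 hu) hv (by simp; omega) (by omega)]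
    simp
  have hy4 : F^[4] y =
      rotR 2 ([true] ++ (u ++ [true] ++ v ++ [false]) ++ [false] ++ [] ++ [false]) := by
    rw [Function.iterate_add_apply F 2 2, hy2,
      iterate_two_rotR_pull hr hF0 hF1 isDyckWord_nil hw (by simp; omega) (by omega)]
    simp
  refine ⟨?_, ?_, ?_, ?_⟩
  · rw [hy, succ_rotR_pull hr hF0 (h10.append_s15 hu) hv (by simp; omega) (Nat.zero_le _)]
    simpa using rotR_length_append [true] (a := [true, false] ++ u ++ [true] ++ v ++ [false])
      (by simp)
  · rw [Function.iterate_succ_apply', hy4,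
      succ_rotR_pull hr hF0 hw isDyckWord_nil (by simp; omega) (by omega)]
    simpa using rotR_length_append [true, false, true] (a := u ++ [true] ++ v ++ [false]) (by simp)
  · rw [Function.iterate_add_apply F 2 4, hy4,
      iterate_two_rotR_pull hr hF0 hF1 hw isDyckWord_nil (by simp; omega) (by omega)]
    simpa using rotR_length_append [true, false, false] (a := u ++ [true] ++ v ++ [false]) (by simp)
  · rw [hz, succ_rotR_pull hr hF0 isDyckWord_nil (hu.wrap_s15.append_s15 hv) (by simp; omega)
      (Nat.zero_le _)]
    simpa using rotR_length_append [true] (a := [true, true] ++ u ++ [false] ++ v ++ [false])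
      (by simp)
end
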